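/- Let W be a Coxeter group and y ≤ w in Bruhat order. Then the Möbius function of the Bruhat order satisfies μ(y,w) = (−1)^{l(w)−l(y)}. Equivalently, the alternating sum ∑_{y ≤ x ≤ w} (−1)^{l(w)−l(x)} equals 1 if y = w and 0 if y < w. -/

import Mathlib

/-!
Induction on `ℓ w`, with a left descent `s` of `w`. If `s` is not a descent of `y`, then
`x ↦ s x` is a sign-reversing involution of `[y, w]`. Otherwise `[s y, w]` is of the first kind,
its part outside `[y, w]` equals the part of `[s y, s w]` outside `[y, s w]`, and both of these
intervals contribute `0` by induction.

Both cases rest on the lifting property of Bruhat order, a consequence of the subword property: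
`x ≤ w` iff `x` is the product of a subword of *every* reduced word of `w`. That is proved through
the chain description of Bruhat order and the strong exchange condition, which comes from the
fact that the parity of the number of occurrences of a reflection in the left inversion sequence
of a word depends only on the product of the word: it is read off a homomorphism from `W` to
`(W → ℤ/2) ⋊ W`.
-/

open CoxeterSystem
open scoped Classical

variable {B W : Type*} [Group W] {M : CoxeterMatrix B}

/-- The subword of `ω` selected by the mask `σ` (positions with mask-value `true`). -/
def maskSubword {α : Type*} (ω : List α) (σ : List Bool) : List α :=
  (ω.zip σ).filterMap (fun p => if p.2 then some p.1 else none)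

/-- The group element `w^σ` determined by a mask `σ` on the word `ω`. -/
def maskProd (cs : CoxeterSystem M W) (ω : List B) (σ : List Bool) : W :=
  cs.wordProd (maskSubword ω σ)

/-- Bruhat order: `x ≤ w` iff some reduced word for `w` has a subword whose product is `x`. -/
def bruhatLE (cs : CoxeterSystem M W) (x w : W) : Prop :=
  ∃ ω φ : List B, cs.IsReduced ω ∧ cs.wordProd ω = w ∧ φ.Sublist ω ∧ cs.wordProd φ = x

/-- Strict Bruhat order. -/
def bruhatLT (cs : CoxeterSystem M W) (x w : W) : Prop :=
  bruhatLE cs x w ∧ x ≠ w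

/-- `z` covers `x` in Bruhat order. -/
def bruhatCovers (cs : CoxeterSystem M W) (x z : W) : Prop :=
  bruhatLT cs x z ∧ cs.length z = cs.length x + 1

/-- Position `j` (0-indexed) is a defect of the mask `σ` on the word `ω`:
multiplying the product of the first `j` masked letters by `ω_j` decreases length. -/
def IsDefect (cs : CoxeterSystem M W) (ω : List B) (σ : List Bool) (j : ℕ) : Prop :=
  ∃ h : j < ω.length, cs.IsRightDescent (maskProd cs (ω.take j) (σ.take j)) (ω.get ⟨j, h⟩)

/-- A constant mask: a mask with no defect positions. -/
def IsConstantMask (cs : CoxeterSystem M W) (ω : List B) (σ : List Bool) : Prop :=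
  σ.length = ω.length ∧ ∀ j, ¬ IsDefect cs ω σ j

theorem neg_one_pow_sub_of_le {R : Type*} [Monoid R] [HasDistribNeg R] {m n : ℕ} (h : n ≤ m) :
    (-1 : R) ^ (m - n) = (-1) ^ m * (-1) ^ n := by
  obtain ⟨k, rfl⟩ := Nat.exists_eq_add_of_le h
  rw [Nat.add_sub_cancel_left, pow_add, mul_assoc, ((Commute.neg_one_left _).pow_pow _ _).eq,
    ← mul_assoc, ← pow_add, Even.neg_one_pow ⟨n, rfl⟩, one_mul]

namespace CoxeterSystem

open List

variable (cs : CoxeterSystem M W)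

local prefix:100 "s " => cs.simple
local prefix:100 "π " => cs.wordProd
local prefix:100 "ℓ " => cs.length
local prefix:100 "lis " => cs.leftInvSeq

def conjArgAut : W →* MulAut (W → Multiplicative (ZMod 2)) where
  toFun w :=
    { toFun := fun f t => f (w⁻¹ * t * w)
      invFun := fun f t => f (w * t * w⁻¹)
      left_inv := fun f => by funext t; group
      right_inv := fun f => by funext t; group
      map_mul' := fun _ _ => rfl }
  map_one' := by ext f t; simp
  map_mul' := fun u v => by ext f t; simp [mul_assoc]

@[simp] theorem conjArgAut_apply (w : W) (f : W → Multiplicative (ZMod 2)) (t : W) :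
    conjArgAut w f t = f (w⁻¹ * t * w) := rfl

abbrev ParityGroup (W : Type*) [Group W] := (W → Multiplicative (ZMod 2)) ⋊[conjArgAut] W

noncomputable def parityGen (i : B) : ParityGroup W := ⟨Pi.mulSingle (s i) (.ofAdd 1), s i⟩

theorem prod_map_parityGen (ω : List B) :
    (ω.map cs.parityGen).prod = ⟨fun t => .ofAdd ((lis ω).count t : ZMod 2), π ω⟩ := by
  induction ω with
  | nil => ext t <;> simp
  | cons i ω ih =>
    rw [map_cons, prod_cons, ih, wordProd_cons]
    ext t
    · have hcount : (lis (i :: ω)).count t = (lis ω).count ((s i)⁻¹ * t * s i) +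
          if t = s i then 1 else 0 := by
        have hconj : t = MulAut.conj (s i) ((s i)⁻¹ * t * s i) := by simp [mul_assoc]
        have hmap : (map (MulAut.conj (s i)) (lis ω)).count t =
            (lis ω).count ((s i)⁻¹ * t * s i) := by
          conv_lhs => rw [hconj]
          exact count_map_of_injective _ _ (MulEquiv.injective _) _
        simp only [leftInvSeq, count_cons, hmap, beq_iff_eq]
        congr 2
        exact propext eq_comm
      simp only [parityGen, SemidirectProduct.mul_left, Pi.mul_apply, conjArgAut_apply,
        Pi.mulSingle_apply, hcount]
      split_ifs <;> simp [add_comm]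
    · rfl

theorem prod_map_alternatingWord_two_mul {G : Type*} [Monoid G] (f : B → G) (i i' : B) (m : ℕ) :
    ((alternatingWord i i' (2 * m)).map f).prod = (f i * f i') ^ m := by
  induction m with
  | zero => simp [alternatingWord]
  | succ m ih =>
    rw [show 2 * (m + 1) = 2 * m + 1 + 1 by ring, alternatingWord_succ', alternatingWord_succ']
    simp [ih, pow_succ', mul_assoc]

theorem even_count_leftInvSeq_braid (i i' : B) (t : W) :
    Even ((lis (alternatingWord i i' (2 * M i i'))).count t) := by
  set p := M i i'
  set L := lis (alternatingWord i i' (2 * p))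
  have hlen : L.length = 2 * p := by simp [L]
  have hL : ∀ k (hk : k < 2 * p), L[k]'(by omega) = s i * (s i' * s i) ^ k := by
    intro k hk
    rw [getElem_leftInvSeq_alternatingWord cs i i' p k hk, prod_alternatingWord_eq_mul_pow,
      if_neg (by simp [parity_simps]), show (2 * k + 1) / 2 = k by omega]
  have hsplit : L = L.take p ++ L.take p := by
    refine ext_getElem (by simp [hlen]; omega) fun k h₁ h₂ => ?_
    rw [getElem_append]
    split_ifs with hk
    · simp
    · simp only [getElem_take, length_take]
      have hp : min p L.length = p := by omega
      rw [hL _ (hlen ▸ h₁), hL _ (by omega), hp, show k = (k - p) + p by simp at hk; omega,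
        pow_add, simple_mul_simple_pow', mul_one, Nat.add_sub_cancel]
  rw [hsplit, count_append]
  exact ⟨_, rfl⟩

theorem isLiftable_parityGen : M.IsLiftable cs.parityGen := by
  intro i i'
  rw [← prod_map_alternatingWord_two_mul, prod_map_parityGen]
  ext t
  · simpa [ZMod.natCast_eq_zero_iff_even] using even_count_leftInvSeq_braid cs i i' t
  · simp [prod_alternatingWord_eq_mul_pow]

noncomputable def parityHom : W →* ParityGroup W :=
  cs.lift ⟨cs.parityGen, cs.isLiftable_parityGen⟩

theorem parityHom_wordProd (ω : List B) :
    cs.parityHom (π ω) = ⟨fun t => .ofAdd ((lis ω).count t : ZMod 2), π ω⟩ := by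
  rw [← prod_map_parityGen, wordProd, map_list_prod, map_map]
  congr 2
  funext i
  exact cs.lift_apply_simple cs.isLiftable_parityGen i

theorem parityHom_right (w : W) : (cs.parityHom w).right = w := by
  obtain ⟨ω, rfl⟩ := cs.wordProd_surjective w
  rw [parityHom_wordProd]

theorem mem_leftInvSeq_of_parityHom_left_ne_one {ω : List B} {t : W}
    (h : (cs.parityHom (π ω)).left t ≠ 1) : t ∈ lis ω := by
  rw [parityHom_wordProd] at h
  refine count_pos_iff.mp (Nat.pos_of_ne_zero fun h0 => h ?_)
  simp [h0]

theorem parityHom_left_self {t : W} (ht : cs.IsReflection t) :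
    (cs.parityHom t).left t = .ofAdd 1 := by
  obtain ⟨v, i, rfl⟩ := ht
  have hsimple : cs.parityHom (s i) = cs.parityGen i :=
    cs.lift_apply_simple cs.isLiftable_parityGen i
  simp only [map_mul, map_inv, hsimple, SemidirectProduct.mul_left, SemidirectProduct.inv_left,
    SemidirectProduct.mul_right, Pi.mul_apply, conjArgAut_apply, parityHom_right, parityGen]
  rw [← map_inv conjArgAut v, ← map_mul, ← MulAut.mul_apply, ← map_mul, Pi.inv_apply,
    conjArgAut_apply,
    show v⁻¹ * (v * s i * v⁻¹) * v = s i by group,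
    show (v * s i * v⁻¹)⁻¹ * (v * s i * v⁻¹) * (v * s i * v⁻¹) = v * s i * v⁻¹ by
      group]
  simp

theorem mem_leftInvSeq_of_isLeftInversion {ω : List B} {t : W}
    (h : cs.IsLeftInversion (π ω) t) : t ∈ lis ω := by
  set u := t * π ω
  have hw : π ω = t * u := by rw [← mul_assoc, h.1.mul_self, one_mul]
  -- `t` is not a left inversion of `u`, so it occurs evenly often in inversion sequences of `u`
  have hu : (cs.parityHom u).left t = 1 := by
    by_contra hne
    obtain ⟨ρ, hρ, hρu⟩ := cs.exists_isReduced u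
    rw [hρu] at hne
    have := (cs.isLeftInversion_of_mem_leftInvSeq hρ
      (cs.mem_leftInvSeq_of_parityHom_left_ne_one hne)).2
    rw [← hρu, ← hw] at this
    exact h.2.not_gt this
  apply mem_leftInvSeq_of_parityHom_left_ne_one
  rw [hw, map_mul, SemidirectProduct.mul_left, Pi.mul_apply, parityHom_left_self cs h.1,
    conjArgAut_apply, parityHom_right, inv_mul_cancel, one_mul, hu, mul_one]
  simp

theorem isReduced_cons_iff {i : B} {ω : List B} :
    cs.IsReduced (i :: ω) ↔ cs.IsReduced ω ∧ ¬cs.IsLeftDescent (π ω) i := by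
  rw [not_isLeftDescent_iff]
  constructor
  · intro h
    have hω : cs.IsReduced ω := by simpa using h.drop 1
    refine ⟨hω, ?_⟩
    have : ℓ (π (i :: ω)) = ω.length + 1 := h
    rw [wordProd_cons] at this
    rw [this, hω.eq]
  · rintro ⟨hω, hlen⟩
    rw [IsReduced, wordProd_cons, hlen, hω.eq, length_cons]

theorem exists_eraseIdx_of_isLeftInversion {ω : List B} {t : W}
    (h : cs.IsLeftInversion (π ω) t) : ∃ j < ω.length, t * π ω = π (ω.eraseIdx j) := by
  obtain ⟨j, hj, rfl⟩ := mem_iff_getElem.mp (cs.mem_leftInvSeq_of_isLeftInversion h)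
  rw [length_leftInvSeq] at hj
  refine ⟨j, hj, ?_⟩
  rw [← getD_leftInvSeq_mul_wordProd, getD_eq_getElem]

theorem exists_isReduced_sublist (ω : List B) :
    ∃ φ, φ <+ ω ∧ cs.IsReduced φ ∧ π φ = π ω := by
  induction ω with
  | nil => exact ⟨[], Sublist.refl _, by simp [IsReduced], rfl⟩
  | cons i ω ih =>
    obtain ⟨φ, hsub, hred, hprod⟩ := ih
    rw [wordProd_cons, ← hprod]
    by_cases hdesc : cs.IsLeftDescent (π φ) i
    · obtain ⟨j, hj, hex⟩ := cs.exists_eraseIdx_of_isLeftInversion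
        ((cs.isLeftInversion_simple_iff_isLeftDescent _ i).mpr hdesc)
      refine ⟨φ.eraseIdx j, (φ.eraseIdx_sublist j).trans (hsub.trans (sublist_cons_self i ω)),
        ?_, hex.symm⟩
      rw [IsReduced, ← hex, length_eraseIdx_of_lt hj, ← hred.eq]
      rw [isLeftDescent_iff] at hdesc
      omega
    · exact ⟨i :: φ, hsub.cons_cons i, cs.isReduced_cons_iff.mpr ⟨hred, hdesc⟩,
        wordProd_cons ..⟩

theorem isLeftDescent_of_isReduced_cons {i : B} {ω : List B} (h : cs.IsReduced (i :: ω)) :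
    cs.IsLeftDescent (π (i :: ω)) i := by
  rw [wordProd_cons, isLeftDescent_iff_not_isLeftDescent_mul, simple_mul_simple_cancel_left]
  exact (cs.isReduced_cons_iff.mp h).2

theorem exists_isReduced_cons_of_isLeftDescent {w : W} {i : B} (h : cs.IsLeftDescent w i) :
    ∃ ρ, cs.IsReduced (i :: ρ) ∧ π (i :: ρ) = w := by
  obtain ⟨ρ, hρ, hρw⟩ := cs.exists_isReduced (s i * w)
  refine ⟨ρ, cs.isReduced_cons_iff.mpr ⟨hρ, ?_⟩, ?_⟩
  · rwa [← hρw, ← isLeftDescent_iff_not_isLeftDescent_mul]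
  · rw [wordProd_cons, ← hρw, simple_mul_simple_cancel_left]

def IsReflectionStep (x z : W) : Prop := ∃ t, cs.IsLeftInversion z t ∧ t * z = x

def ChainLE : W → W → Prop := Relation.ReflTransGen cs.IsReflectionStep

variable {cs}

theorem IsReflectionStep.length_lt {x z : W} (h : cs.IsReflectionStep x z) : ℓ x < ℓ z := by
  obtain ⟨t, ht, rfl⟩ := h
  exact ht.2

theorem isReflectionStep_simple_mul {x : W} {i : B} (h : cs.IsLeftDescent x i) :
    cs.IsReflectionStep (s i * x) x :=
  ⟨s i, (cs.isLeftInversion_simple_iff_isLeftDescent x i).mpr h, rfl⟩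

theorem isReflectionStep_of_not_isLeftDescent {x : W} {i : B} (h : ¬cs.IsLeftDescent x i) :
    cs.IsReflectionStep x (s i * x) := by
  rw [isLeftDescent_iff_not_isLeftDescent_mul, not_not] at h
  simpa only [simple_mul_simple_cancel_left] using isReflectionStep_simple_mul h

theorem IsReflectionStep.simple_mul {u w : W} {i : B} (h : cs.IsReflectionStep u w)
    (hlen : ℓ (s i * u) < ℓ (s i * w)) : cs.IsReflectionStep (s i * u) (s i * w) := by
  obtain ⟨t, ht, rfl⟩ := h
  refine ⟨s i * t * (s i)⁻¹, ⟨ht.1.conj _, ?_⟩, by group⟩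
  convert hlen using 2
  group

theorem ChainLE.length_le {x w : W} (h : cs.ChainLE x w) : ℓ x ≤ ℓ w := by
  induction h with
  | refl => rfl
  | tail _ hstep ih => exact ih.trans hstep.length_lt.le

theorem ChainLE.eq_of_length_le {x w : W} (h : cs.ChainLE x w) (hlen : ℓ w ≤ ℓ x) :
    x = w := by
  rcases h.cases_tail with rfl | ⟨u, (hxu : cs.ChainLE x u), hstep⟩
  · rfl
  · exact absurd hlen (hxu.length_le.trans_lt hstep.length_lt).not_ge

theorem ChainLE.exists_sublist {x w : W} (h : cs.ChainLE x w) {ω : List B}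
    (hω : cs.IsReduced ω) (hw : π ω = w) :
    ∃ χ, χ <+ ω ∧ cs.IsReduced χ ∧ π χ = x := by
  induction h generalizing ω with
  | refl => exact ⟨ω, .refl _, hω, hw⟩
  | tail _ hstep ih =>
    obtain ⟨t, ht, rfl⟩ := hstep
    subst hw
    obtain ⟨j, -, hj⟩ := cs.exists_eraseIdx_of_isLeftInversion ht
    obtain ⟨ρ, hρ, hρred, hρprod⟩ := cs.exists_isReduced_sublist (ω.eraseIdx j)
    obtain ⟨χ, hχ, hχred, rfl⟩ := ih hρred (hρprod.trans hj.symm)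
    exact ⟨χ, hχ.trans (hρ.trans (ω.eraseIdx_sublist j)), hχred, rfl⟩

-- The next two lemmas are the two halves of a joint induction on `ℓ w` (completed in
-- `ChainLE.simple_mul`); `hlift` is the induction hypothesis.
theorem chainLE_of_sublist_of_lift {n : ℕ}
    (hlift : ∀ {u x : W} {i : B}, ℓ u < n → ¬cs.IsLeftDescent u i → cs.ChainLE x u →
      cs.ChainLE (s i * x) (s i * u))
    {ω χ : List B} (hω : cs.IsReduced ω) (hn : ω.length ≤ n) (hχ : χ <+ ω) :
    cs.ChainLE (π χ) (π ω) := by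
  induction ω generalizing χ with
  | nil => rw [sublist_nil.mp hχ]; exact .refl
  | cons i ω ih =>
    obtain ⟨hω', hi⟩ := cs.isReduced_cons_iff.mp hω
    rw [length_cons] at hn
    rcases sublist_cons_iff.mp hχ with hχω | ⟨χ, rfl, hχω⟩
    · rw [wordProd_cons]
      exact (ih hω' (by omega) hχω).tail (isReflectionStep_of_not_isLeftDescent hi)
    · rw [wordProd_cons, wordProd_cons]
      exact hlift (by rw [hω'.eq]; omega) hi (ih hω' (by omega) hχω)

theorem ChainLE.simple_mul_of_lift {x w : W} {i : B}
    (hlift : ∀ {u x : W} {i : B}, ℓ u < ℓ w → ¬cs.IsLeftDescent u i → cs.ChainLE x u →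
      cs.ChainLE (s i * x) (s i * u))
    (hx : cs.ChainLE x w) (hw : ¬cs.IsLeftDescent w i) : cs.ChainLE (s i * x) (s i * w) := by
  rcases hx.cases_tail with rfl | ⟨u, (hxu : cs.ChainLE x u), hstep⟩
  · exact .refl
  have hwsw : cs.ChainLE w (s i * w) := .single (isReflectionStep_of_not_isLeftDescent hw)
  by_cases hu : cs.IsLeftDescent u i
  · by_cases hx' : cs.IsLeftDescent x i
    · exact ((Relation.ReflTransGen.single (isReflectionStep_simple_mul hx')).trans
        (hxu.tail hstep)).trans hwsw
    -- a reduced subword for `x` of a reduced word `i :: ρ` for `u` must avoid the letter `i`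
    obtain ⟨ρ, hρ, rfl⟩ := cs.exists_isReduced_cons_of_isLeftDescent hu
    obtain ⟨χ, hχ, hχred, rfl⟩ := hxu.exists_sublist hρ rfl
    rcases sublist_cons_iff.mp hχ with hχρ | ⟨χ, rfl, -⟩
    · have hlen : (i :: ρ).length ≤ ℓ w := by rw [← hρ.eq]; exact hstep.length_lt.le
      have := chainLE_of_sublist_of_lift hlift hρ hlen (hχρ.cons_cons i)
      rw [wordProd_cons] at this
      exact (this.tail hstep).trans hwsw
    · exact absurd (cs.isLeftDescent_of_isReduced_cons hχred) hx'
  · refine (hlift hstep.length_lt hu hxu).tail (hstep.simple_mul ?_)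
    rw [not_isLeftDescent_iff] at hu hw
    have := hstep.length_lt
    omega

theorem ChainLE.simple_mul {x w : W} {i : B} (hx : cs.ChainLE x w)
    (hw : ¬cs.IsLeftDescent w i) : cs.ChainLE (s i * x) (s i * w) := by
  induction hn : ℓ w using Nat.strong_induction_on generalizing x w i with
  | _ n ih => exact hx.simple_mul_of_lift (fun hu hu' hxu => ih _ (hn ▸ hu) hxu hu' rfl) hw

theorem chainLE_of_sublist {ω χ : List B} (hω : cs.IsReduced ω) (hχ : χ <+ ω) :
    cs.ChainLE (π χ) (π ω) :=
  chainLE_of_sublist_of_lift (fun _ hu hxu => hxu.simple_mul hu) hω le_rfl hχ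

theorem bruhatLE_iff_chainLE {x w : W} : bruhatLE cs x w ↔ cs.ChainLE x w := by
  constructor
  · rintro ⟨ω, χ, hω, rfl, hχ, rfl⟩
    exact chainLE_of_sublist hω hχ
  · intro h
    obtain ⟨ω, hω, rfl⟩ := cs.exists_isReduced w
    obtain ⟨χ, hχ, -, rfl⟩ := h.exists_sublist hω rfl
    exact ⟨ω, χ, hω, rfl, hχ, rfl⟩

theorem _root_.bruhatLE.exists_sublist {x w : W} (h : bruhatLE cs x w) {ω : List B}
    (hω : cs.IsReduced ω) (hw : π ω = w) : ∃ χ, χ <+ ω ∧ cs.IsReduced χ ∧ π χ = x :=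
  (bruhatLE_iff_chainLE.mp h).exists_sublist hω hw

theorem bruhatLE_refl (x : W) : bruhatLE cs x x :=
  bruhatLE_iff_chainLE.mpr .refl

theorem _root_.bruhatLE.trans {x y z : W} (hxy : bruhatLE cs x y) (hyz : bruhatLE cs y z) :
    bruhatLE cs x z :=
  bruhatLE_iff_chainLE.mpr ((bruhatLE_iff_chainLE.mp hxy).trans (bruhatLE_iff_chainLE.mp hyz))

theorem _root_.bruhatLE.length_le {x w : W} (h : bruhatLE cs x w) : ℓ x ≤ ℓ w :=
  (bruhatLE_iff_chainLE.mp h).length_le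

theorem _root_.bruhatLE.antisymm {x w : W} (hxw : bruhatLE cs x w) (hwx : bruhatLE cs w x) :
    x = w :=
  (bruhatLE_iff_chainLE.mp hxw).eq_of_length_le hwx.length_le

theorem eq_one_of_bruhatLE_one {x : W} (h : bruhatLE cs x 1) : x = 1 := by
  simpa [length_eq_zero_iff] using h.length_le

theorem simple_mul_bruhatLE_self {x : W} {i : B} (h : cs.IsLeftDescent x i) :
    bruhatLE cs (s i * x) x :=
  bruhatLE_iff_chainLE.mpr (.single (isReflectionStep_simple_mul h))

theorem bruhatLE_simple_mul_self {x : W} {i : B} (h : ¬cs.IsLeftDescent x i) :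
    bruhatLE cs x (s i * x) :=
  bruhatLE_iff_chainLE.mpr (.single (isReflectionStep_of_not_isLeftDescent h))

theorem _root_.bruhatLE.simple_mul_bruhatLE {x w : W} {i : B} (h : bruhatLE cs x w)
    (hw : cs.IsLeftDescent w i) : bruhatLE cs (s i * x) w := by
  obtain ⟨ρ, hρ, rfl⟩ := cs.exists_isReduced_cons_of_isLeftDescent hw
  obtain ⟨χ, hχ, -, rfl⟩ := h.exists_sublist hρ rfl
  rcases sublist_cons_iff.mp hχ with hχρ | ⟨χ, rfl, hχρ⟩
  · exact ⟨_, i :: χ, hρ, rfl, hχρ.cons_cons i, wordProd_cons ..⟩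
  · refine ⟨_, χ, hρ, rfl, hχρ.trans (sublist_cons_self i ρ), ?_⟩
    rw [wordProd_cons, simple_mul_simple_cancel_left]

theorem _root_.bruhatLE.bruhatLE_simple_mul {x w : W} {i : B} (h : bruhatLE cs x w)
    (hw : cs.IsLeftDescent w i) (hx : ¬cs.IsLeftDescent x i) : bruhatLE cs x (s i * w) := by
  obtain ⟨ρ, hρ, rfl⟩ := cs.exists_isReduced_cons_of_isLeftDescent hw
  obtain ⟨χ, hχ, hχred, rfl⟩ := h.exists_sublist hρ rfl
  rcases sublist_cons_iff.mp hχ with hχρ | ⟨χ, rfl, -⟩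
  · rw [wordProd_cons, simple_mul_simple_cancel_left]
    exact ⟨ρ, χ, (cs.isReduced_cons_iff.mp hρ).1, rfl, hχρ, rfl⟩
  · exact absurd (cs.isLeftDescent_of_isReduced_cons hχred) hx

theorem finite_setOf_bruhatLE (w : W) : {x | bruhatLE cs x w}.Finite := by
  obtain ⟨ω, hω, rfl⟩ := cs.exists_isReduced w
  refine (ω.sublists.map cs.wordProd).finite_toSet.subset fun x (hx : bruhatLE cs x _) => ?_
  obtain ⟨χ, hχ, -, rfl⟩ := hx.exists_sublist hω rfl
  exact mem_map.mpr ⟨χ, mem_sublists.mpr hχ, rfl⟩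

variable (cs) in
noncomputable def bruhatIcc (y w : W) : Finset W :=
  ((cs.finite_setOf_bruhatLE w).inter_of_right {x | bruhatLE cs y x}).toFinset

theorem mem_bruhatIcc {x y w : W} :
    x ∈ cs.bruhatIcc y w ↔ bruhatLE cs y x ∧ bruhatLE cs x w := by
  simp [bruhatIcc]

theorem bruhatIcc_self (w : W) : cs.bruhatIcc w w = {w} := by
  ext x
  rw [mem_bruhatIcc, Finset.mem_singleton]
  refine ⟨fun ⟨hwx, hxw⟩ => hxw.antisymm hwx, ?_⟩
  rintro rfl
  exact ⟨bruhatLE_refl x, bruhatLE_refl x⟩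

theorem filter_bruhatIcc_of_bruhatLE {u y : W} (h : bruhatLE cs u y) (w : W) :
    (cs.bruhatIcc u w).filter (bruhatLE cs y) = cs.bruhatIcc y w := by
  ext x
  simp only [Finset.mem_filter, mem_bruhatIcc]
  exact ⟨fun ⟨⟨_, hxw⟩, hyx⟩ => ⟨hyx, hxw⟩,
    fun ⟨hyx, hxw⟩ => ⟨⟨h.trans hyx, hxw⟩, hyx⟩⟩

theorem neg_one_pow_length_simple_mul {R : Type*} [Monoid R] [HasDistribNeg R]
    (x : W) (i : B) : (-1 : R) ^ ℓ (s i * x) = -(-1) ^ ℓ x := by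
  rcases cs.length_simple_mul x i with h | h
  · rw [h, pow_succ, mul_neg_one]
  · rw [← h, pow_succ, mul_neg_one, neg_neg]

theorem sum_bruhatIcc_eq_zero_of_isLeftDescent {y w : W} {i : B} (hw : cs.IsLeftDescent w i)
    (hy : ¬cs.IsLeftDescent y i) : ∑ x ∈ cs.bruhatIcc y w, (-1 : ℤ) ^ ℓ x = 0 := by
  refine Finset.sum_involution (fun x _ => s i * x)
    (fun x _ => by rw [neg_one_pow_length_simple_mul, add_neg_cancel])
    (fun x _ _ h => cs.length_simple_mul_ne x i (congrArg cs.length h)) (fun x hx => ?_)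
    (fun x _ => cs.simple_mul_simple_cancel_left i)
  rw [mem_bruhatIcc] at hx ⊢
  refine ⟨?_, hx.2.simple_mul_bruhatLE hw⟩
  by_cases hx' : cs.IsLeftDescent x i
  · exact hx.1.bruhatLE_simple_mul hx' hy
  · exact hx.1.trans (bruhatLE_simple_mul_self hx')

theorem filter_not_bruhatLE_bruhatIcc_eq {y w : W} {i : B} (hw : cs.IsLeftDescent w i) :
    (cs.bruhatIcc (s i * y) w).filter (¬bruhatLE cs y ·) =
      (cs.bruhatIcc (s i * y) (s i * w)).filter (¬bruhatLE cs y ·) := by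
  ext x
  simp only [Finset.mem_filter, mem_bruhatIcc]
  constructor
  · rintro ⟨⟨hsyx, hxw⟩, hyx⟩
    refine ⟨⟨hsyx, ?_⟩, hyx⟩
    -- by lifting, `i` being a descent of `x` would force `y = s i * (s i * y) ≤ x`
    by_cases hx : cs.IsLeftDescent x i
    · exact absurd (by simpa using hsyx.simple_mul_bruhatLE hx) hyx
    · exact hxw.bruhatLE_simple_mul hw hx
  · rintro ⟨⟨hsyx, hxsw⟩, hyx⟩
    exact ⟨⟨hsyx, hxsw.trans (simple_mul_bruhatLE_self hw)⟩, hyx⟩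

theorem sum_bruhatIcc_eq_zero {y w : W} (hyw : y ≠ w) :
    ∑ x ∈ cs.bruhatIcc y w, (-1 : ℤ) ^ ℓ x = 0 := by
  induction hn : ℓ w using Nat.strong_induction_on generalizing y w with
  | _ n ih =>
  rcases eq_or_ne w 1 with rfl | hw1
  · refine Finset.sum_eq_zero fun x hx => absurd ?_ hyw
    rw [mem_bruhatIcc] at hx
    exact eq_one_of_bruhatLE_one (hx.1.trans hx.2)
  obtain ⟨i, hw⟩ := cs.exists_leftDescent_of_ne_one hw1
  rcases em' (cs.IsLeftDescent y i) with hy | hy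
  · exact sum_bruhatIcc_eq_zero_of_isLeftDescent hw hy
  have hsy : bruhatLE cs (s i * y) y := simple_mul_bruhatLE_self hy
  have hlen : ℓ (s i * w) < n := hn ▸ hw
  have hzero_sy_w : ∑ x ∈ cs.bruhatIcc (s i * y) w, (-1 : ℤ) ^ ℓ x = 0 :=
    sum_bruhatIcc_eq_zero_of_isLeftDescent hw
      (by rwa [← isLeftDescent_iff_not_isLeftDescent_mul])
  have hzero_sy_sw : ∑ x ∈ cs.bruhatIcc (s i * y) (s i * w), (-1 : ℤ) ^ ℓ x = 0 :=
    ih _ hlen (fun h => hyw (mul_left_cancel h)) rfl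
  have hzero_y_sw : ∑ x ∈ cs.bruhatIcc y (s i * w), (-1 : ℤ) ^ ℓ x = 0 := by
    refine ih _ hlen (fun h => ?_) rfl
    rw [IsLeftDescent, h, simple_mul_simple_cancel_left] at hy
    exact hy.not_gt hw
  -- split `[s y, w]` and `[s y, s w]` along `y ≤ x`: the parts with `y ≰ x` coincide
  rw [← Finset.sum_filter_add_sum_filter_not _ (bruhatLE cs y), filter_bruhatIcc_of_bruhatLE hsy,
    filter_not_bruhatLE_bruhatIcc_eq hw] at hzero_sy_w
  rw [← Finset.sum_filter_add_sum_filter_not _ (bruhatLE cs y), filter_bruhatIcc_of_bruhatLE hsy,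
    hzero_y_sw, zero_add] at hzero_sy_sw
  rwa [hzero_sy_sw, add_zero] at hzero_sy_w

end CoxeterSystem

theorem mobius_bruhat_general (cs : CoxeterSystem M W) {y w : W}
    (F : Finset W) (hF : ∀ x, x ∈ F ↔ (bruhatLE cs y x ∧ bruhatLE cs x w)) :
    ∑ x ∈ F, (-1 : ℤ) ^ (cs.length w - cs.length x) = if y = w then 1 else 0 := by
  obtain rfl : F = cs.bruhatIcc y w := Finset.ext fun x => (hF x).trans cs.mem_bruhatIcc.symm
  split_ifs with hyw
  · subst hyw
    simp [bruhatIcc_self]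
  calc ∑ x ∈ cs.bruhatIcc y w, (-1 : ℤ) ^ (cs.length w - cs.length x)
      = (-1) ^ cs.length w * ∑ x ∈ cs.bruhatIcc y w, (-1) ^ cs.length x := by
        rw [Finset.mul_sum]
        exact Finset.sum_congr rfl fun x hx =>
          neg_one_pow_sub_of_le (cs.mem_bruhatIcc.mp hx).2.length_le
    _ = 0 := by rw [cs.sum_bruhatIcc_eq_zero hyw, mul_zero]

/-- **Verma's theorem** (Möbius function of Bruhat order): for `y ≤ w`, the alternating sum
`∑_{y ≤ x ≤ w} (−1)^{ℓ(w) − ℓ(x)}` equals `1` if `y = w` and `0` if `y < w`; equivalently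
`μ(y, w) = (−1)^{ℓ(w) − ℓ(y)}`. -/
theorem mobius_bruhat (cs : CoxeterSystem M W) {y w : W} (hyw : bruhatLE cs y w)
    (F : Finset W) (hF : ∀ x, x ∈ F ↔ (bruhatLE cs y x ∧ bruhatLE cs x w)) :
    ∑ x ∈ F, (-1 : ℤ) ^ (cs.length w - cs.length x) = if y = w then 1 else 0 :=
  mobius_bruhat_general cs F hF
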